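/- arXiv:0902.0043 — 5 statements merged into one kernel-verified Lean document; each statement's English description precedes it below -/
import Mathlib

section
/- If Δ * A ⊢ holds in the sequent calculus G_β and Δ * ¬A ⊢ holds, where A is the sentence ∀P:o. P (i.e. Π^o(λP:o. P)), then Δ * ¬(∀P:o. P) is derivable in G_β with at most 3 additional proof steps beyond the two given derivations. (That is, ∀P:o. P is 3-cut-strong.) -/
namespace CutSim

inductive Ty : Type
  | o : Ty
  | i : Ty
  | arr : Ty → Ty → Ty
  deriving DecidableEq

inductive Tm : Type
  | var : ℕ → Tm
  | param : ℕ → Ty → Tm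
  | cnot : Tm
  | cor : Tm
  | cpi : Ty → Tm
  | app : Tm → Tm → Tm
  | lam : Ty → Tm → Tm
  deriving DecidableEq

open Ty Tm

/-- negation ¬A -/
def NEG (A : Tm) : Tm := .app .cnot A
/-- disjunction A ∨ B -/
def OR (A B : Tm) : Tm := .app (.app .cor A) B
/-- Π^α F -/
def PI (a : Ty) (F : Tm) : Tm := .app (.cpi a) F
/-- implication A ⇒ B := ¬A ∨ B -/
def IMP (A B : Tm) : Tm := OR (NEG A) B
/-- equivalence A ⟺ B := ¬(¬(A⇒B) ∨ ¬(B⇒A)) -/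
def IFF (A B : Tm) : Tm := NEG (OR (NEG (IMP A B)) (NEG (IMP B A)))

/-- de Bruijn shifting: add d to all variables ≥ c -/
def shift (d c : ℕ) : Tm → Tm
  | .var n => if n < c then .var n else .var (n + d)
  | .param k a => .param k a
  | .cnot => .cnot
  | .cor => .cor
  | .cpi a => .cpi a
  | .app f x => .app (shift d c f) (shift d c x)
  | .lam a b => .lam a (shift d (c+1) b)

/-- capture-avoiding substitution of s for variable k -/
def subst (k : ℕ) (s : Tm) : Tm → Tm
  | .var n => if n = k then shift k 0 s else if k < n then .var (n-1) else .var n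
  | .param m a => .param m a
  | .cnot => .cnot
  | .cor => .cor
  | .cpi a => .cpi a
  | .app f x => .app (subst k s f) (subst k s x)
  | .lam a b => .lam a (subst (k+1) s b)

/-- simple typing relation -/
inductive HasTy : List Ty → Tm → Ty → Prop
  | var {Γ n a} : Γ[n]? = some a → HasTy Γ (.var n) a
  | param {Γ k a} : HasTy Γ (.param k a) a
  | cnot {Γ} : HasTy Γ .cnot (.arr .o .o)
  | cor {Γ} : HasTy Γ .cor (.arr .o (.arr .o .o))
  | cpi {Γ a} : HasTy Γ (.cpi a) (.arr (.arr a .o) .o)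
  | app {Γ f x a b} : HasTy Γ f (.arr a b) → HasTy Γ x a → HasTy Γ (.app f x) b
  | lam {Γ a B b} : HasTy (a :: Γ) B b → HasTy Γ (.lam a B) (.arr a b)

/-- a sentence is a closed formula of type o -/
def Sent (A : Tm) : Prop := HasTy [] A .o

/-- one-step β-reduction -/
inductive Beta : Tm → Tm → Prop
  | beta {a B s} : Beta (.app (.lam a B) s) (subst 0 s B)
  | appl {f f' x} : Beta f f' → Beta (.app f x) (.app f' x)
  | appr {f x x'} : Beta x x' → Beta (.app f x) (.app f x')
  | lam {a b b'} : Beta b b' → Beta (.lam a b) (.lam a b')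

def BetaStar : Tm → Tm → Prop := Relation.ReflTransGen Beta
def IsBetaNormal (A : Tm) : Prop := ∀ B, ¬ Beta A B
/-- B is the β-normal form of A -/
def BetaNF (A B : Tm) : Prop := BetaStar A B ∧ IsBetaNormal B
/-- β-equality (via confluence: common reduct) -/
def BetaEq (A B : Tm) : Prop := ∃ C, BetaStar A C ∧ BetaStar B C

def headIsLogical : Tm → Prop
  | .app f _ => headIsLogical f
  | .cnot => True
  | .cor => True
  | .cpi _ => True
  | _ => False

/-- atomic formula: β-normal, head not a logical constant -/
def Atomic (A : Tm) : Prop := IsBetaNormal A ∧ ¬ headIsLogical A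

def OccursParam (k : ℕ) (a : Ty) : Tm → Prop
  | .param m b => k = m ∧ a = b
  | .app f x => OccursParam k a f ∨ OccursParam k a x
  | .lam _ b => OccursParam k a b
  | _ => False

/-- β-normal sentence -/
def BNSent (C : Tm) : Prop := Sent C ∧ IsBetaNormal C

/-- The sequent calculus G_β, with the number of proof steps as index. -/
inductive Der : Finset Tm → ℕ → Prop
  | init {Δ : Finset Tm} {A} : Atomic A → Der (insert A (insert (NEG A) Δ)) 1
  | negI {Δ : Finset Tm} {A n} : Der (insert A Δ) n → Der (insert (NEG (NEG A)) Δ) (n+1)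
  | orL {Δ : Finset Tm} {A B n m} : Der (insert (NEG A) Δ) n → Der (insert (NEG B) Δ) m →
      Der (insert (NEG (OR A B)) Δ) (n+m+1)
  | orR {Δ : Finset Tm} {A B n} : Der (insert A (insert B Δ)) n → Der (insert (OR A B) Δ) (n+1)
  | piL {Δ : Finset Tm} {a F C D n} : HasTy [] C a → BetaNF (.app F C) D →
      Der (insert (NEG D) Δ) n → Der (insert (NEG (PI a F)) Δ) (n+1)
  | piR {Δ : Finset Tm} {a F c D n} : BetaNF (.app F (.param c a)) D →
      (∀ B ∈ insert (PI a F) Δ, ¬ OccursParam c a B) →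
      Der (insert D Δ) n → Der (insert (PI a F) Δ) (n+1)

/-- A is k-cut-strong for G_β -/
def CutStrong (k : ℕ) (A : Tm) : Prop :=
  ∀ (Δ : Finset Tm) (C : Tm) (n m : ℕ), BNSent C →
    Der (insert C Δ) n → Der (insert (NEG C) Δ) m →
    ∃ s ≤ n + m + k, Der (insert (NEG A) Δ) s

/-- Leibniz equality M ≐^α N := Π^{α→o}(λP. ¬(P M) ∨ (P N)) -/
def leib (a : Ty) (M N : Tm) : Tm :=
  PI (.arr a .o) (.lam (.arr a .o)
    (OR (NEG (.app (.var 0) (shift 1 0 M))) (.app (.var 0) (shift 1 0 N))))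

lemma shift_zero (c : ℕ) (t : Tm) : shift 0 c t = t := by
  induction t generalizing c with
  | var n => simp [shift]
  | _ => simp_all [shift]

lemma subst_zero_var_zero (s : Tm) : subst 0 s (.var 0) = s := by
  simp [subst, shift_zero]

lemma betaNF_of_beta {A B : Tm} (h : Beta A B) (hB : IsBetaNormal B) : BetaNF A B :=
  ⟨.single h, hB⟩

lemma betaNF_app_lam_var_zero (a : Ty) {s : Tm} (hs : IsBetaNormal s) :
    BetaNF (.app (.lam a (.var 0)) s) s := by
  refine betaNF_of_beta ?_ hs
  simpa only [subst_zero_var_zero] using @Beta.beta a (.var 0) s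

/-- ∀P:o. P is 3-cut-strong in G_β -/
theorem stmt0 : CutStrong 3 (PI .o (.lam .o (.var 0))) := by
  rintro Δ C n m ⟨hC, hCnormal⟩ - hnegC
  exact ⟨m + 1, by omega, Der.piL hC (betaNF_app_lam_var_zero .o hCnormal) hnegC⟩

end CutSim
end

section
/- The double-negation inversion rule (from Δ * ¬¬A infer Δ * A) is 0-admissible in G_β: if Δ * ¬¬A is derivable in G_β with a derivation of size n, then Δ * A is derivable in G_β with a derivation of size at most n. -/
namespace CutSim

open Ty Tm

/-!
Induction on the derivation of `Δ * ¬¬A`, generalised to every `Δ` with `insert ¬¬A Δ` equal to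
the conclusion: since sequents are sets, `¬¬A` may still occur in `Δ`. A rule whose principal
formula is not this `¬¬A` is permuted below the inversion. If `¬¬A` is principal, the premise is
`Δ₀ * A` with `insert ¬¬A Δ₀ = insert ¬¬A Δ`: it is `Δ * A` itself, or `¬¬A ∈ Δ` and the rule
can be kept, or `¬¬A ∈ Δ₀` and the induction hypothesis applies to the premise.
-/

theorem _root_.Finset.exists_eq_insert_of_insert_eq_insert {α : Type*} [DecidableEq α]
    {a b : α} {s t : Finset α} (hab : a ≠ b) (h : insert a s = insert b t) :
    ∃ u, s = insert b u ∧ t = insert a u := by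
  refine ⟨s ∩ t, ?_, ?_⟩ <;> ext x <;> have hx := congrArg (x ∈ ·) h <;>
    simp only [Finset.mem_insert, Finset.mem_inter, eq_iff_iff] at hx ⊢ <;> grind

theorem NEG_injective : Function.Injective NEG := fun _ _ h => by injection h

theorem occursParam_NEG {c : ℕ} {a : Ty} {A : Tm} :
    OccursParam c a (NEG A) ↔ OccursParam c a A := by
  simp [NEG, OccursParam]

theorem Atomic.ne_NEG {B : Tm} (hB : Atomic B) (C : Tm) : B ≠ NEG C := by
  rintro rfl
  exact hB.2 trivial

theorem Der.init_of_mem {Δ : Finset Tm} {B : Tm} (hB : Atomic B) (hBΔ : B ∈ Δ)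
    (hNBΔ : NEG B ∈ Δ) : Der Δ 1 := by
  have := Der.init (Δ := Δ) hB
  rwa [Finset.insert_eq_of_mem hNBΔ, Finset.insert_eq_of_mem hBΔ] at this

def InvertsNegNeg (Γ : Finset Tm) (n : ℕ) : Prop :=
  ∀ A Δ, insert (NEG (NEG A)) Δ = Γ → ∃ m ≤ n, Der (insert A Δ) m

theorem InvertsNegNeg.exists_der_insert {Y A : Tm} {Δ : Finset Tm} {n : ℕ}
    (h : InvertsNegNeg (insert Y (insert (NEG (NEG A)) Δ)) n) :
    ∃ m ≤ n, Der (insert Y (insert A Δ)) m := by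
  simpa only [Finset.insert_comm A Y] using h A (insert Y Δ) (Finset.insert_comm _ _ _)

theorem Der.invertsNegNeg_negI {A : Tm} {Δ Δ₀ : Finset Tm} {n : ℕ}
    (hprem : Der (insert A Δ₀) n) (ih : InvertsNegNeg (insert A Δ₀) n)
    (hΓ : insert (NEG (NEG A)) Δ = insert (NEG (NEG A)) Δ₀) :
    ∃ m ≤ n + 1, Der (insert A Δ) m := by
  by_cases h₀ : NEG (NEG A) ∈ Δ₀
  · obtain ⟨m, hm, hder⟩ := ih A (insert A Δ) (by
      rw [Finset.insert_comm, hΓ, Finset.insert_eq_of_mem h₀])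
    exact ⟨m, by omega, by rwa [Finset.insert_idem] at hder⟩
  by_cases hΔ : NEG (NEG A) ∈ Δ
  · refine ⟨n + 1, le_rfl, ?_⟩
    rw [← Finset.insert_eq_of_mem hΔ, hΓ, Finset.insert_comm]
    exact Der.negI (by rwa [Finset.insert_idem])
  · have hΔ₀ : Δ₀ = Δ := by
      rw [← Finset.erase_insert h₀, ← hΓ, Finset.erase_insert hΔ]
    exact ⟨n, n.le_succ, hΔ₀ ▸ hprem⟩

theorem Der.invertsNegNeg {Γ : Finset Tm} {n : ℕ} (h : Der Γ n) : InvertsNegNeg Γ n := by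
  induction h with
  | @init Δ₀ B hB =>
    intro A Δ hΓ
    have hmem : ∀ X ∈ insert B (insert (NEG B) Δ₀), X ≠ NEG (NEG A) → X ∈ insert A Δ :=
      fun X hX hne => Finset.mem_insert_of_mem (Finset.mem_of_mem_insert_of_ne (hΓ ▸ hX) hne)
    exact ⟨1, le_rfl, Der.init_of_mem hB (hmem B (by simp) (hB.ne_NEG _))
      (hmem (NEG B) (by simp) fun h => hB.ne_NEG _ (NEG_injective h))⟩
  | @negI Δ₀ B n hprem ih =>
    intro A Δ hΓ
    by_cases hBA : B = A
    · subst hBA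
      exact hprem.invertsNegNeg_negI ih hΓ
    · have hne : NEG (NEG B) ≠ NEG (NEG A) := fun h => hBA (NEG_injective (NEG_injective h))
      obtain ⟨Δ₁, rfl, rfl⟩ := Finset.exists_eq_insert_of_insert_eq_insert hne hΓ.symm
      obtain ⟨m, hm, hder⟩ := ih.exists_der_insert
      exact ⟨m + 1, by omega, Finset.insert_comm A _ Δ₁ ▸ Der.negI hder⟩
  | @orL Δ₀ P Q n k _ _ ihP ihQ =>
    intro A Δ hΓ
    obtain ⟨Δ₁, rfl, rfl⟩ :=
      Finset.exists_eq_insert_of_insert_eq_insert (by simp [NEG, OR]) hΓ.symm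
    obtain ⟨m₁, hm₁, hder₁⟩ := ihP.exists_der_insert
    obtain ⟨m₂, hm₂, hder₂⟩ := ihQ.exists_der_insert
    exact ⟨m₁ + m₂ + 1, by omega, Finset.insert_comm A _ Δ₁ ▸ Der.orL hder₁ hder₂⟩
  | @orR Δ₀ P Q n _ ih =>
    intro A Δ hΓ
    obtain ⟨Δ₁, rfl, rfl⟩ :=
      Finset.exists_eq_insert_of_insert_eq_insert (by simp [NEG, OR]) hΓ.symm
    rw [Finset.insert_comm Q] at ih
    obtain ⟨m, hm, hder⟩ := ih.exists_der_insert
    rw [← Finset.insert_comm Q] at hder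
    exact ⟨m + 1, by omega, Finset.insert_comm A _ Δ₁ ▸ Der.orR hder⟩
  | @piL Δ₀ a F C D n hC hNF _ ih =>
    intro A Δ hΓ
    obtain ⟨Δ₁, rfl, rfl⟩ :=
      Finset.exists_eq_insert_of_insert_eq_insert (by simp [NEG, PI]) hΓ.symm
    obtain ⟨m, hm, hder⟩ := ih.exists_der_insert
    exact ⟨m + 1, by omega, Finset.insert_comm A _ Δ₁ ▸ Der.piL hC hNF hder⟩
  | @piR Δ₀ a F c D n hNF hfresh _ ih =>
    intro A Δ hΓ
    obtain ⟨Δ₁, rfl, rfl⟩ :=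
      Finset.exists_eq_insert_of_insert_eq_insert (by simp [NEG, PI]) hΓ.symm
    obtain ⟨m, hm, hder⟩ := ih.exists_der_insert
    have hfresh' : ∀ B ∈ insert (PI a F) (insert A Δ₁), ¬ OccursParam c a B := by
      simp only [Finset.forall_mem_insert, occursParam_NEG] at hfresh ⊢
      exact hfresh
    exact ⟨m + 1, by omega, Finset.insert_comm A _ Δ₁ ▸ Der.piR hNF hfresh' hder⟩

/-- double-negation inversion is 0-admissible in G_β -/
theorem stmt5 (Δ : Finset Tm) (A : Tm) (n : ℕ)
    (h : Der (insert (NEG (NEG A)) Δ) n) :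
    ∃ m ≤ n, Der (insert A Δ) m :=
  h.invertsNegNeg A Δ rfl

end CutSim
end

section
/- Cut-simulation via cut-strong members: let Δ be a sequent containing ¬A for some formula A, and let G_β^{cut} be G_β extended by the unrestricted cut rule (from Δ' * C and Δ' * ¬C infer Δ'), and G_β^{cut_A} be G_β extended by the restricted rule cut_A (from Δ' * C and Δ' * ¬C infer Δ' * ¬A). Then every derivation of Δ in G_β^{cut} with d proof steps can be transformed into a derivation of Δ in G_β^{cut_A} with d proof steps. -/
namespace CutSim

open Ty Tm

/-- G_β + unrestricted cut; indices: number of proof steps, number of cut applications -/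
inductive DerC : Finset Tm → ℕ → ℕ → Prop
  | init {Δ : Finset Tm} {A} : Atomic A → DerC (insert A (insert (NEG A) Δ)) 1 0
  | negI {Δ : Finset Tm} {A n p} : DerC (insert A Δ) n p →
      DerC (insert (NEG (NEG A)) Δ) (n+1) p
  | orL {Δ : Finset Tm} {A B n m p q} : DerC (insert (NEG A) Δ) n p →
      DerC (insert (NEG B) Δ) m q → DerC (insert (NEG (OR A B)) Δ) (n+m+1) (p+q)
  | orR {Δ : Finset Tm} {A B n p} : DerC (insert A (insert B Δ)) n p →
      DerC (insert (OR A B) Δ) (n+1) p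
  | piL {Δ : Finset Tm} {a F C D n p} : HasTy [] C a → BetaNF (.app F C) D →
      DerC (insert (NEG D) Δ) n p → DerC (insert (NEG (PI a F)) Δ) (n+1) p
  | piR {Δ : Finset Tm} {a F c D n p} : BetaNF (.app F (.param c a)) D →
      (∀ B ∈ insert (PI a F) Δ, ¬ OccursParam c a B) →
      DerC (insert D Δ) n p → DerC (insert (PI a F) Δ) (n+1) p
  | cut {Δ : Finset Tm} {C n m p q} : BNSent C → DerC (insert C Δ) n p →
      DerC (insert (NEG C) Δ) m q → DerC Δ (n+m+1) (p+q+1)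

/-- G_β + cut_A; indices: number of proof steps, number of cut_A applications -/
inductive DerCA (A : Tm) : Finset Tm → ℕ → ℕ → Prop
  | init {Δ : Finset Tm} {B} : Atomic B → DerCA A (insert B (insert (NEG B) Δ)) 1 0
  | negI {Δ : Finset Tm} {B n p} : DerCA A (insert B Δ) n p →
      DerCA A (insert (NEG (NEG B)) Δ) (n+1) p
  | orL {Δ : Finset Tm} {B C n m p q} : DerCA A (insert (NEG B) Δ) n p →
      DerCA A (insert (NEG C) Δ) m q → DerCA A (insert (NEG (OR B C)) Δ) (n+m+1) (p+q)
  | orR {Δ : Finset Tm} {B C n p} : DerCA A (insert B (insert C Δ)) n p →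
      DerCA A (insert (OR B C) Δ) (n+1) p
  | piL {Δ : Finset Tm} {a F C D n p} : HasTy [] C a → BetaNF (.app F C) D →
      DerCA A (insert (NEG D) Δ) n p → DerCA A (insert (NEG (PI a F)) Δ) (n+1) p
  | piR {Δ : Finset Tm} {a F c D n p} : BetaNF (.app F (.param c a)) D →
      (∀ B ∈ insert (PI a F) Δ, ¬ OccursParam c a B) →
      DerCA A (insert D Δ) n p → DerCA A (insert (PI a F) Δ) (n+1) p
  | cutA {Δ : Finset Tm} {C n m p q} : BNSent C → DerCA A (insert C Δ) n p →
      DerCA A (insert (NEG C) Δ) m q → DerCA A (insert (NEG A) Δ) (n+m+1) (p+q+1)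

/-!
Adding `¬A` to every sequent of a G_β + cut derivation keeps each rule instance an instance of
the same rule, except that a cut with conclusion `Δ'` becomes a `cut_A` with conclusion
`Δ' * ¬A`; as `¬A ∈ Δ`, the end sequent is unchanged. The one obstruction is the eigenvariable
condition of `Π⁺`, as the eigenvariable may occur in `A`; it is removed by first renaming the
eigenvariable to a parameter fresh for `A`, which preserves derivations and their step counts.
-/

namespace Tm

def renameParams (σ : Ty → Equiv.Perm ℕ) : Tm → Tm
  | .var n => .var n
  | .param k a => .param (σ a k) a
  | .cnot => .cnot
  | .cor => .cor
  | .cpi a => .cpi a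
  | .app f x => .app (renameParams σ f) (renameParams σ x)
  | .lam a t => .lam a (renameParams σ t)

def maxParam : Tm → ℕ
  | .param k _ => k
  | .app f x => max (maxParam f) (maxParam x)
  | .lam _ t => maxParam t
  | _ => 0

end Tm

section Renaming

variable (σ : Ty → Equiv.Perm ℕ)

@[simp] lemma renameParams_inv_renameParams (t : Tm) :
    renameParams σ⁻¹ (renameParams σ t) = t := by
  induction t <;> simp_all [renameParams]

@[simp] lemma renameParams_NEG (t : Tm) : renameParams σ (NEG t) = NEG (renameParams σ t) := rfl

@[simp] lemma renameParams_OR (s t : Tm) :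
    renameParams σ (OR s t) = OR (renameParams σ s) (renameParams σ t) := rfl

@[simp] lemma renameParams_PI (a : Ty) (t : Tm) :
    renameParams σ (PI a t) = PI a (renameParams σ t) := rfl

lemma renameParams_shift (d j : ℕ) (t : Tm) :
    renameParams σ (shift d j t) = shift d j (renameParams σ t) := by
  induction t generalizing j with
  | var n => simp only [shift, renameParams]; split_ifs <;> rfl
  | _ => simp_all [shift, renameParams]

lemma renameParams_subst (k : ℕ) (s t : Tm) :
    renameParams σ (subst k s t) = subst k (renameParams σ s) (renameParams σ t) := by
  induction t generalizing k with
  | var n => simp only [subst, renameParams]; split_ifs <;> simp [renameParams, renameParams_shift]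
  | _ => simp_all [subst, renameParams]

lemma renameParams_eq_self {t : Tm} (h : ∀ k a, OccursParam k a t → σ a k = k) :
    renameParams σ t = t := by
  induction t <;> simp_all [renameParams, OccursParam]

lemma occursParam_renameParams_iff {k : ℕ} {a : Ty} {t : Tm} :
    OccursParam k a (renameParams σ t) ↔ OccursParam ((σ a)⁻¹ k) a t := by
  induction t with
  | param m b =>
    simp only [renameParams, OccursParam]
    constructor
    · rintro ⟨rfl, rfl⟩; simp
    · rintro ⟨rfl, rfl⟩; simp
  | _ => simp_all [renameParams, OccursParam]

lemma headIsLogical_renameParams_iff (t : Tm) :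
    headIsLogical (renameParams σ t) ↔ headIsLogical t := by
  induction t <;> simp_all [renameParams, headIsLogical]

variable {σ}

lemma Beta.renameParams {t u : Tm} (h : Beta t u) :
    Beta (renameParams σ t) (renameParams σ u) := by
  induction h with
  | beta => rw [renameParams_subst]; exact .beta
  | appl _ ih => exact .appl ih
  | appr _ ih => exact .appr ih
  | lam _ ih => exact .lam ih

lemma BetaStar.renameParams {t u : Tm} (h : BetaStar t u) :
    BetaStar (renameParams σ t) (renameParams σ u) :=
  Relation.ReflTransGen.lift (Tm.renameParams σ) (fun _ _ => Beta.renameParams) _ _ h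

lemma IsBetaNormal.renameParams {t : Tm} (h : IsBetaNormal t) :
    IsBetaNormal (renameParams σ t) := fun u hu =>
  h (Tm.renameParams σ⁻¹ u) (by simpa using hu.renameParams (σ := σ⁻¹))

lemma BetaNF.renameParams {t u : Tm} (h : BetaNF t u) :
    BetaNF (renameParams σ t) (renameParams σ u) :=
  ⟨h.1.renameParams, h.2.renameParams⟩

lemma HasTy.renameParams {Γ : List Ty} {t : Tm} {a : Ty} (h : HasTy Γ t a) :
    HasTy Γ (renameParams σ t) a := by
  induction h with
  | var h => exact .var h
  | param => exact .param
  | cnot => exact .cnot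
  | cor => exact .cor
  | cpi => exact .cpi
  | app _ _ ihf ihx => exact .app ihf ihx
  | lam _ ih => exact .lam ih

lemma Atomic.renameParams {t : Tm} (h : Atomic t) : Atomic (renameParams σ t) :=
  ⟨h.1.renameParams, by rw [headIsLogical_renameParams_iff]; exact h.2⟩

lemma BNSent.renameParams {t : Tm} (h : BNSent t) : BNSent (renameParams σ t) :=
  ⟨h.1.renameParams, h.2.renameParams⟩

end Renaming

lemma OccursParam.le_maxParam {k : ℕ} {a : Ty} {t : Tm} (h : OccursParam k a t) :
    k ≤ t.maxParam := by
  induction t with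
  | param m b => exact h.1.le
  | app f x ihf ihx =>
    exact h.elim (fun h => le_max_of_le_left (ihf h)) (fun h => le_max_of_le_right (ihx h))
  | lam b t ih => exact ih h
  | _ => exact h.elim

lemma exists_fresh_param (S : Finset Tm) (a : Ty) : ∃ k, ∀ t ∈ S, ¬ OccursParam k a t :=
  ⟨S.sup Tm.maxParam + 1, fun _ ht h => by
    have := h.le_maxParam.trans (Finset.le_sup ht)
    omega⟩

lemma renameParams_swap_eq_self {e M : ℕ} {b : Ty} {t : Tm} (he : ¬ OccursParam e b t)
    (hM : ¬ OccursParam M b t) :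
    renameParams (Pi.mulSingle b (Equiv.swap e M) : Ty → Equiv.Perm ℕ) t = t := by
  refine renameParams_eq_self _ fun k a hk => ?_
  by_cases hab : a = b
  · subst hab
    rw [Pi.mulSingle_eq_same]
    exact Equiv.swap_apply_of_ne_of_ne (fun h => he (h ▸ hk)) (fun h => hM (h ▸ hk))
  · rw [Pi.mulSingle_eq_of_ne hab]
    rfl

lemma DerC.renameParams (σ : Ty → Equiv.Perm ℕ) {Δ : Finset Tm} {n p : ℕ}
    (h : DerC Δ n p) :
    DerC (Δ.image (Tm.renameParams σ)) n p := by
  induction h with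
  | init hA =>
    simp only [Finset.image_insert, renameParams_NEG]
    exact .init hA.renameParams
  | negI _ ih =>
    simp only [Finset.image_insert, renameParams_NEG] at ih ⊢
    exact .negI ih
  | orL _ _ ih₁ ih₂ =>
    simp only [Finset.image_insert, renameParams_NEG, renameParams_OR] at ih₁ ih₂ ⊢
    exact .orL ih₁ ih₂
  | orR _ ih =>
    simp only [Finset.image_insert, renameParams_OR] at ih ⊢
    exact .orR ih
  | piL hC hNF _ ih =>
    simp only [Finset.image_insert, renameParams_NEG, renameParams_PI] at ih ⊢
    exact .piL hC.renameParams hNF.renameParams ih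
  | @piR Δ b F e D n p hNF hcond _ ih =>
    simp only [Finset.image_insert] at ih ⊢
    refine .piR (c := σ b e) hNF.renameParams ?_ ih
    intro B hB hocc
    rw [← renameParams_PI, ← Finset.image_insert] at hB
    obtain ⟨B₀, hB₀, rfl⟩ := Finset.mem_image.mp hB
    rw [occursParam_renameParams_iff, Equiv.Perm.coe_inv, Equiv.symm_apply_apply] at hocc
    exact hcond B₀ hB₀ hocc
  | cut hC _ _ ih₁ ih₂ =>
    simp only [Finset.image_insert, renameParams_NEG] at ih₁ ih₂
    exact .cut hC.renameParams ih₁ ih₂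

lemma DerC.rename_eigenvariable {Δ : Finset Tm} {b : Ty} {F D : Tm} {e M n p : ℕ}
    (hNF : BetaNF (.app F (.param e b)) D) (he : ∀ B ∈ insert (PI b F) Δ, ¬ OccursParam e b B)
    (hM : ∀ B ∈ insert (PI b F) Δ, ¬ OccursParam M b B) (h : DerC (insert D Δ) n p) :
    ∃ D', BetaNF (.app F (.param M b)) D' ∧ DerC (insert D' Δ) n p := by
  set σ : Ty → Equiv.Perm ℕ := Pi.mulSingle b (Equiv.swap e M)
  have hfix : ∀ B ∈ insert (PI b F) Δ, Tm.renameParams σ B = B := fun B hB =>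
    renameParams_swap_eq_self (he B hB) (hM B hB)
  have hF : Tm.renameParams σ F = F := by
    simpa [PI, Tm.renameParams] using hfix _ (Finset.mem_insert_self _ _)
  have hΔ : Δ.image (Tm.renameParams σ) = Δ := by
    rw [Finset.image_congr (g := id) fun B hB => hfix B (Finset.mem_insert_of_mem hB),
      Finset.image_id]
  refine ⟨Tm.renameParams σ D, ?_, ?_⟩
  · simpa [Tm.renameParams, hF, σ] using hNF.renameParams (σ := σ)
  · simpa [hΔ] using h.renameParams σ

lemma DerC.toDerCA_insert_neg (A : Tm) {n : ℕ} :
    ∀ {Δ : Finset Tm} {p : ℕ}, DerC Δ n p → ∃ q, DerCA A (insert (NEG A) Δ) n q := by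
  induction n using Nat.strong_induction_on with
  | _ n IH =>
  intro Δ p h
  cases h with
  | @init Δ B hB =>
    refine ⟨0, ?_⟩
    rw [Finset.insert_comm (NEG A), Finset.insert_comm (NEG A)]
    exact .init hB
  | negI h =>
    obtain ⟨q, hq⟩ := IH _ (by omega) h
    rw [Finset.insert_comm] at hq
    exact ⟨q, by rw [Finset.insert_comm]; exact .negI hq⟩
  | orL h₁ h₂ =>
    obtain ⟨q₁, hq₁⟩ := IH _ (by omega) h₁
    obtain ⟨q₂, hq₂⟩ := IH _ (by omega) h₂
    rw [Finset.insert_comm] at hq₁ hq₂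
    exact ⟨q₁ + q₂, by rw [Finset.insert_comm]; exact .orL hq₁ hq₂⟩
  | orR h =>
    obtain ⟨q, hq⟩ := IH _ (by omega) h
    rw [Finset.insert_comm (NEG A), Finset.insert_comm (NEG A)] at hq
    exact ⟨q, by rw [Finset.insert_comm]; exact .orR hq⟩
  | piL hC hNF h =>
    obtain ⟨q, hq⟩ := IH _ (by omega) h
    rw [Finset.insert_comm] at hq
    exact ⟨q, by rw [Finset.insert_comm]; exact .piL hC hNF hq⟩
  | @piR Δ b F e D n p hNF hcond h =>
    obtain ⟨M, hM⟩ := exists_fresh_param (insert A (insert (PI b F) Δ)) b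
    obtain ⟨D', hNF', h'⟩ :=
      h.rename_eigenvariable hNF hcond fun B hB => hM B (Finset.mem_insert_of_mem hB)
    obtain ⟨q, hq⟩ := IH _ (by omega) h'
    rw [Finset.insert_comm] at hq
    refine ⟨q, ?_⟩
    rw [Finset.insert_comm]
    refine .piR hNF' ?_ hq
    simp only [Finset.mem_insert, forall_eq_or_imp] at hM ⊢
    exact ⟨hM.2.1, fun hA => hM.1 (by simpa [NEG, OccursParam] using hA), hM.2.2⟩
  | cut hC h₁ h₂ =>
    obtain ⟨q₁, hq₁⟩ := IH _ (by omega) h₁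
    obtain ⟨q₂, hq₂⟩ := IH _ (by omega) h₂
    rw [Finset.insert_comm] at hq₁ hq₂
    exact ⟨q₁ + q₂ + 1, by simpa using DerCA.cutA hC hq₁ hq₂⟩

theorem stmt10_general (A : Tm) (Δ : Finset Tm) (hmem : NEG A ∈ Δ)
    (d p : ℕ) (h : DerC Δ d p) : ∃ q, DerCA A Δ d q := by
  simpa [Finset.insert_eq_of_mem hmem] using h.toDerCA_insert_neg A

/-- cut-simulation: if ¬A ∈ Δ, every derivation of Δ in G_β+cut with d steps becomes
    a derivation of Δ in G_β+cut_A with d steps -/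
theorem stmt10 (A : Tm) (hA : BNSent A) (Δ : Finset Tm) (hmem : NEG A ∈ Δ)
    (d p : ℕ) (h : DerC Δ d p) : ∃ q, DerCA A Δ d q :=
  stmt10_general A Δ hmem d p h

end CutSim
end

section
/- If A is a k-cut-strong formula for G_β, then every derivation of a sequent Δ in G_β extended by the rule cut_A (from Δ' * C and Δ' * ¬C infer Δ' * ¬A) with d proof steps and n applications of cut_A can be transformed into a derivation of Δ in plain G_β with at most d + n·k proof steps. -/
namespace CutSim

open Ty Tm

/-- if A is k-cut-strong, cut_A can be eliminated with at most k extra steps per cut -/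
theorem stmt11 (k : ℕ) (A : Tm) (hA : CutStrong k A) (Δ : Finset Tm) (d p : ℕ)
    (h : DerCA A Δ d p) : ∃ s ≤ d + p * k, Der Δ s := by
  induction h with
  | init hB => exact ⟨1, Nat.le_add_right 1 _, .init hB⟩
  | negI _ ih =>
    obtain ⟨s, hs, hd⟩ := ih
    exact ⟨s + 1, by omega, .negI hd⟩
  | orL _ _ ih₁ ih₂ =>
    obtain ⟨s₁, hs₁, hd₁⟩ := ih₁
    obtain ⟨s₂, hs₂, hd₂⟩ := ih₂
    exact ⟨s₁ + s₂ + 1, by rw [add_mul]; omega, .orL hd₁ hd₂⟩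
  | orR _ ih =>
    obtain ⟨s, hs, hd⟩ := ih
    exact ⟨s + 1, by omega, .orR hd⟩
  | piL hC hNF _ ih =>
    obtain ⟨s, hs, hd⟩ := ih
    exact ⟨s + 1, by omega, .piL hC hNF hd⟩
  | piR hNF hFresh _ ih =>
    obtain ⟨s, hs, hd⟩ := ih
    exact ⟨s + 1, by omega, .piR hNF hFresh hd⟩
  | cutA hC _ _ ih₁ ih₂ =>
    obtain ⟨s₁, hs₁, hd₁⟩ := ih₁
    obtain ⟨s₂, hs₂, hd₂⟩ := ih₂
    obtain ⟨s, hs, hd⟩ := hA _ _ _ _ hC hd₁ hd₂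
    exact ⟨s, by rw [add_mul, add_mul, one_mul]; omega, hd⟩

end CutSim
end

section
/- The Boolean extensionality axiom B, namely ∀A:o. ∀B:o. (A ⟺ B) ⇒ A ≐^o B, is 14-cut-strong in the sequent calculus G_β: from derivations of Δ * C in n steps and Δ * ¬C in m steps one obtains a derivation of Δ * ¬B in at most n+m+14 steps. -/
namespace CutSim

open Ty Tm

/-- Boolean extensionality axiom: ∀A:o. ∀B:o. (A ⟺ B) ⇒ A ≐^o B -/
def BoolExtAx : Tm :=
  PI .o (.lam .o (PI .o (.lam .o
    (IMP (IFF (.var 1) (.var 0)) (leib .o (.var 1) (.var 0))))))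

/-! Both quantifiers are instantiated with a parameter `a : o`. The premise `a ⟺ a` has a
derivation of fixed size, and the conclusion `a ≐ a` is refuted by instantiating the Leibniz
predicate with the vacuous `λX. C`: this turns `¬(a ≐ a)` into `¬(¬C ∨ C)`, whose derivation
is exactly a cut on `C`. -/

def Tm.isLam : Tm → Bool
  | .lam _ _ => true
  | _ => false

def Tm.isNormal : Tm → Bool
  | .app f x => !f.isLam && f.isNormal && x.isNormal
  | .lam _ b => b.isNormal
  | _ => true

lemma Tm.isNormal_eq_false_of_beta {A B : Tm} (h : Beta A B) : A.isNormal = false := by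
  induction h with
  | beta => simp [isNormal, isLam]
  | appl _ ih | appr _ ih | lam _ ih => simp [isNormal, ih]

lemma Tm.exists_beta_of_isNormal_eq_false {A : Tm} (h : A.isNormal = false) : ∃ B, Beta A B := by
  induction A with
  | app f x ihf ihx =>
    simp only [isNormal, Bool.and_eq_false_iff, Bool.not_eq_false'] at h
    rcases h with (hlam | hf) | hx
    · cases f <;> simp only [isLam, Bool.false_eq_true] at hlam
      exact ⟨_, Beta.beta⟩
    · exact (ihf hf).elim fun _ hB => ⟨_, Beta.appl hB⟩
    · exact (ihx hx).elim fun _ hB => ⟨_, Beta.appr hB⟩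
  | lam a b ih => exact (ih h).elim fun _ hB => ⟨_, Beta.lam hB⟩
  | _ => simp [isNormal] at h

lemma isBetaNormal_iff_isNormal {A : Tm} : IsBetaNormal A ↔ A.isNormal = true := by
  refine ⟨fun hA => ?_, fun hA B hB => by simp [Tm.isNormal_eq_false_of_beta hB] at hA⟩
  by_contra hf
  obtain ⟨B, hB⟩ := Tm.exists_beta_of_isNormal_eq_false (by simpa using hf)
  exact hA B hB

lemma HasTy.shift_eq {Γ : List Ty} {t : Tm} {a : Ty} (h : HasTy Γ t a) :
    ∀ {d c : ℕ}, Γ.length ≤ c → shift d c t = t := by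
  induction h with
  | var hn =>
    intro d c hc
    simp [shift, (List.getElem?_eq_some_iff.1 hn).1.trans_le hc]
  | app _ _ ihf ihx => intro d c hc; simp [shift, ihf hc, ihx hc]
  | lam _ ih => intro d c hc; simp [shift, ih (Nat.succ_le_succ hc)]
  | _ => intros; rfl

lemma HasTy.subst_eq {Γ : List Ty} {t : Tm} {a : Ty} (h : HasTy Γ t a) :
    ∀ {k : ℕ} (s : Tm), Γ.length ≤ k → subst k s t = t := by
  induction h with
  | @var _ n _ hn =>
    intro k s hk
    have hn : n < k := (List.getElem?_eq_some_iff.1 hn).1.trans_le hk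
    simp [subst, hn.ne, hn.not_gt]
  | app _ _ ihf ihx => intro k s hk; simp [subst, ihf s hk, ihx s hk]
  | lam _ ih => intro k s hk; simp [subst, ih s (Nat.succ_le_succ hk)]
  | _ => intros; rfl

lemma HasTy.append {Γ : List Ty} {t : Tm} {a : Ty} (h : HasTy Γ t a) (Γ' : List Ty) :
    HasTy (Γ ++ Γ') t a := by
  induction h with
  | var hn => exact HasTy.var (List.getElem?_append_left (List.getElem?_eq_some_iff.1 hn).1 ▸ hn)
  | param => exact HasTy.param
  | cnot => exact HasTy.cnot
  | cor => exact HasTy.cor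
  | cpi => exact HasTy.cpi
  | app _ _ ihf ihx => exact HasTy.app ihf ihx
  | lam _ ih => exact HasTy.lam ih

lemma Beta.app_lam_of_closed {a : Ty} {B : Tm} {b : Ty} (hB : HasTy [] B b) (s : Tm) :
    Beta (.app (.lam a B) s) B := by
  simpa only [hB.subst_eq s (Nat.zero_le 0)] using Beta.beta (a := a) (B := B) (s := s)

lemma Der.iff_self {A : Tm} (hA : Atomic A) (Δ : Finset Tm) : Der (insert (IFF A A) Δ) 7 := by
  have hinit : Der (insert (NEG A) (insert A Δ)) 1 := by
    rw [Finset.insert_comm]; exact Der.init hA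
  have himp : Der (insert (NEG (NEG (IMP A A))) Δ) 3 := Der.negI (Der.orR hinit)
  exact Der.orL himp himp

lemma Der.neg_leib_self {Δ : Finset Tm} {C M : Tm} {α : Ty} {n m : ℕ} (hC : BNSent C)
    (hM : HasTy [] M α) (hpos : Der (insert C Δ) n) (hneg : Der (insert (NEG C) Δ) m) :
    Der (insert (NEG (leib α M M)) Δ) (n + m + 3) := by
  obtain ⟨hCty, hCnorm⟩ := hC
  have hP : HasTy [] (.lam α C) (.arr α .o) := HasTy.lam (hCty.append [α])
  have hPM : Beta (.app (.lam α C) M) C := Beta.app_lam_of_closed hCty M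
  let body : Tm := OR (NEG (.app (.var 0) (shift 1 0 M))) (.app (.var 0) (shift 1 0 M))
  have hinst : subst 0 (.lam α C) body = OR (NEG (.app (.lam α C) M)) (.app (.lam α C) M) := by
    simp [body, OR, NEG, subst, hM.shift_eq (Nat.zero_le 0), hM.subst_eq _ (Nat.zero_le 0),
      hP.shift_eq (Nat.zero_le 0)]
  have hred : BetaNF (.app (.lam (.arr α .o) body) (.lam α C)) (OR (NEG C) C) := by
    have hβ : Beta (.app (.lam (.arr α .o) body) (.lam α C))
        (OR (NEG (.app (.lam α C) M)) (.app (.lam α C) M)) := hinst ▸ Beta.beta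
    refine ⟨.head hβ (.head (Beta.appl (Beta.appr (Beta.appr hPM)))
      (.single (Beta.appr hPM))), ?_⟩
    rw [isBetaNormal_iff_isNormal] at hCnorm ⊢
    simp [OR, NEG, Tm.isNormal, Tm.isLam, hCnorm]
  rw [show n + m + 3 = n + 1 + m + 1 + 1 by omega]
  exact Der.piL hP hred (Der.orL (Der.negI hpos) hneg)

lemma BetaNF.app_lam {a : Ty} {B s : Tm} (h : (subst 0 s B).isNormal = true) :
    BetaNF (.app (.lam a B) s) (subst 0 s B) :=
  ⟨.single Beta.beta, isBetaNormal_iff_isNormal.2 h⟩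

/-- Boolean extensionality is 14-cut-strong in G_β -/
theorem stmt13 : CutStrong 14 BoolExtAx := by
  intro Δ C n m hC hpos hneg
  let a : Tm := .param 0 .o
  have ha : Atomic a := ⟨isBetaNormal_iff_isNormal.2 rfl, id⟩
  have hiff : Der (insert (NEG (NEG (IFF a a))) Δ) 8 := Der.negI (Der.iff_self ha Δ)
  have himp : Der (insert (NEG (IMP (IFF a a) (leib .o a a))) Δ) (8 + (n + m + 3) + 1) :=
    Der.orL hiff (Der.neg_leib_self hC HasTy.param hpos hneg)
  have hinner : Der (insert (NEG (PI .o (.lam .o (IMP (IFF a (.var 0)) (leib .o a (.var 0)))))) Δ)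
      (8 + (n + m + 3) + 1 + 1) :=
    Der.piL HasTy.param (BetaNF.app_lam (by decide)) himp
  exact ⟨_, by omega, Der.piL HasTy.param (BetaNF.app_lam (by decide)) hinner⟩

end CutSim
end
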